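/- Let f : ℝ → ℝ be twice continuously differentiable on [0,∞) with f(0) = 0, f'(0) = 0, and f(t) → 1 as t → ∞. Then the transition energy of f satisfies ∫₀^∞ ((f(t)−1)² + (f''(t))²) dt ≥ √2. -/

import Mathlib

/-!
Write `u = f - 1` and `Φ(u, v) = √2 u² + 2uv + √2 v²`. Completing the square,
`u² + u''² = (u + √2 u' + u'')² - (d/dt) Φ(u, u')`, so
`∫₀ᵀ (u² + u''²) ≥ Φ(u 0, u' 0) - Φ(u T, u' T) = √2 - Φ(u T, u' T)`.
By the mean value theorem `u'` tends to `0` along some sequence `T → ∞`, along which `u → 0`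
as well, so the last term vanishes in the limit.
-/

open MeasureTheory Filter Set Topology

noncomputable def profileCalibration (u v : ℝ) : ℝ := √2 * u ^ 2 + 2 * u * v + √2 * v ^ 2

theorem tendsto_profileCalibration_zero {α : Type*} {l : Filter α} {u v : α → ℝ}
    (hu : Tendsto u l (𝓝 0)) (hv : Tendsto v l (𝓝 0)) :
    Tendsto (fun x ↦ profileCalibration (u x) (v x)) l (𝓝 0) := by
  simpa [profileCalibration] using
    (((hu.pow 2).const_mul √2).add ((hu.const_mul 2).mul hv)).add ((hv.pow 2).const_mul √2)

theorem hasDerivWithinAt_profileCalibration {u u' u'' : ℝ → ℝ} {s : Set ℝ} {t : ℝ}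
    (hu : HasDerivWithinAt u (u' t) s t) (hu' : HasDerivWithinAt u' (u'' t) s t) :
    HasDerivWithinAt (fun x ↦ profileCalibration (u x) (u' x))
      ((u t + √2 * u' t + u'' t) ^ 2 - (u t ^ 2 + u'' t ^ 2)) s t := by
  have h := (((hu.pow 2).const_mul √2).add ((hu.const_mul 2).mul hu')).add
    ((hu'.pow 2).const_mul √2)
  refine h.congr_deriv ?_
  have hsq : √2 ^ 2 = 2 := Real.sq_sqrt zero_le_two
  norm_num
  linear_combination (-(u' t) ^ 2) * hsq

theorem profileCalibration_sub_le_integral {u u' u'' : ℝ → ℝ} {a b : ℝ} (hab : a ≤ b)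
    (hu : ∀ t ∈ Icc a b, HasDerivWithinAt u (u' t) (Icc a b) t)
    (hu' : ∀ t ∈ Icc a b, HasDerivWithinAt u' (u'' t) (Icc a b) t)
    (hu'' : ContinuousOn u'' (Icc a b)) :
    profileCalibration (u a) (u' a) - profileCalibration (u b) (u' b) ≤
      ∫ t in a..b, (u t ^ 2 + u'' t ^ 2) := by
  have hcu : ContinuousOn u (Icc a b) := fun t ht ↦ (hu t ht).continuousWithinAt
  have hcu' : ContinuousOn u' (Icc a b) := fun t ht ↦ (hu' t ht).continuousWithinAt
  have hsub : uIcc a b ⊆ Icc a b := (uIcc_of_le hab).le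
  have hE : IntervalIntegrable (fun t ↦ u t ^ 2 + u'' t ^ 2) volume a b :=
    (((hcu.pow 2).add (hu''.pow 2)).mono hsub).intervalIntegrable
  have hS : IntervalIntegrable (fun t ↦ (u t + √2 * u' t + u'' t) ^ 2) volume a b :=
    ((((hcu.add (hcu'.const_smul √2)).add hu'').pow 2).mono hsub).intervalIntegrable
  have hftc := intervalIntegral.integral_eq_sub_of_hasDerivAt_of_le hab
    (fun t ht ↦ (hasDerivWithinAt_profileCalibration (hu t ht) (hu' t ht)).continuousWithinAt)
    (fun t ht ↦ (hasDerivWithinAt_profileCalibration (hu t (Ioo_subset_Icc_self ht))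
      (hu' t (Ioo_subset_Icc_self ht))).hasDerivAt (Icc_mem_nhds ht.1 ht.2)) (hS.sub hE)
  have hSnonneg : 0 ≤ ∫ t in a..b, (u t + √2 * u' t + u'' t) ^ 2 :=
    intervalIntegral.integral_nonneg hab fun t _ ↦ sq_nonneg _
  rw [intervalIntegral.integral_sub hS hE] at hftc
  linarith

theorem ofReal_profileCalibration_sub_le_lintegral {u u' u'' : ℝ → ℝ} {a b : ℝ} (hab : a ≤ b)
    (hu : ∀ t ∈ Ici a, HasDerivWithinAt u (u' t) (Ici a) t)
    (hu' : ∀ t ∈ Ici a, HasDerivWithinAt u' (u'' t) (Ici a) t)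
    (hu'' : ContinuousOn u'' (Ici a)) :
    ENNReal.ofReal (profileCalibration (u a) (u' a) - profileCalibration (u b) (u' b)) ≤
      ∫⁻ t in Ioi a, ENNReal.ofReal (u t ^ 2 + u'' t ^ 2) := by
  have hle := profileCalibration_sub_le_integral hab
    (fun t ht ↦ (hu t ht.1).mono Icc_subset_Ici_self)
    (fun t ht ↦ (hu' t ht.1).mono Icc_subset_Ici_self) (hu''.mono Icc_subset_Ici_self)
  have hcu : ContinuousOn u (Ici a) := fun t ht ↦ (hu t ht).continuousWithinAt
  have hint : IntegrableOn (fun t ↦ u t ^ 2 + u'' t ^ 2) (Ioc a b) :=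
    ((((hcu.pow 2).add (hu''.pow 2)).mono Icc_subset_Ici_self).integrableOn_compact
      isCompact_Icc).mono_set Ioc_subset_Icc_self
  calc ENNReal.ofReal (profileCalibration (u a) (u' a) - profileCalibration (u b) (u' b))
      ≤ ENNReal.ofReal (∫ t in Ioc a b, (u t ^ 2 + u'' t ^ 2)) := by
        rw [← intervalIntegral.integral_of_le hab]
        exact ENNReal.ofReal_le_ofReal hle
    _ = ∫⁻ t in Ioc a b, ENNReal.ofReal (u t ^ 2 + u'' t ^ 2) :=
        ofReal_integral_eq_lintegral_ofReal hint (.of_forall fun t ↦ by positivity)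
    _ ≤ ∫⁻ t in Ioi a, ENNReal.ofReal (u t ^ 2 + u'' t ^ 2) :=
        lintegral_mono_set Ioc_subset_Ioi_self

theorem exists_tendsto_atTop_deriv_tendsto_zero {f f' : ℝ → ℝ} {a L : ℝ}
    (hf : ∀ t, a < t → HasDerivAt f (f' t) t) (hlim : Tendsto f atTop (𝓝 L)) :
    ∃ c : ℕ → ℝ, (∀ n, a < c n) ∧ Tendsto c atTop atTop ∧ Tendsto (f' ∘ c) atTop (𝓝 0) := by
  have hmvt (n : ℕ) : ∃ c ∈ Ioo (a + n + 1) (a + n + 2),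
      f' c = (f (a + n + 2) - f (a + n + 1)) / ((a + n + 2) - (a + n + 1)) :=
    have hf' (t : ℝ) (ht : a + n + 1 ≤ t) : HasDerivAt f (f' t) t :=
      hf t (by linarith [n.cast_nonneg (α := ℝ)])
    exists_hasDerivAt_eq_slope f f' (by linarith)
      (fun t ht ↦ (hf' t ht.1).continuousAt.continuousWithinAt) (fun t ht ↦ hf' t ht.1.le)
  choose c hc hslope using hmvt
  have hshift (k : ℝ) : Tendsto (fun n : ℕ ↦ a + n + k) atTop atTop :=
    tendsto_atTop_add_const_right _ k
      (tendsto_atTop_add_const_left _ a tendsto_natCast_atTop_atTop)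
  refine ⟨c, fun n ↦ by linarith [(hc n).1, n.cast_nonneg (α := ℝ)],
    tendsto_atTop_mono (fun n ↦ (hc n).1.le) (hshift 1), ?_⟩
  have hslope' (n : ℕ) : f' (c n) = f (a + n + 2) - f (a + n + 1) := by rw [hslope]; ring
  simpa [Function.comp_def, hslope'] using ((hlim.comp (hshift 2)).sub (hlim.comp (hshift 1)))

theorem optimal_profile_lower_bound (f : ℝ → ℝ)
    (hf : ContDiffOn ℝ 2 f (Set.Ici 0))
    (h0 : f 0 = 0)
    (h0' : derivWithin f (Set.Ici 0) 0 = 0)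
    (hlim : Tendsto f atTop (nhds 1)) :
    ENNReal.ofReal (Real.sqrt 2) ≤
      ∫⁻ t in Set.Ioi (0 : ℝ),
        ENNReal.ofReal
          ((f t - 1) ^ 2 +
            (derivWithin (derivWithin f (Set.Ici 0)) (Set.Ici 0) t) ^ 2) := by
  set g := derivWithin f (Ici 0)
  set h := derivWithin g (Ici 0)
  have hg : ContDiffOn ℝ 1 g (Ici 0) := hf.derivWithin (uniqueDiffOn_Ici 0) (by norm_num)
  have hfg (t : ℝ) (ht : t ∈ Ici 0) : HasDerivWithinAt (fun x ↦ f x - 1) (g t) (Ici 0) t :=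
    ((hf.differentiableOn two_ne_zero t ht).hasDerivWithinAt).sub_const 1
  have hgh (t : ℝ) (ht : t ∈ Ici 0) : HasDerivWithinAt g (h t) (Ici 0) t :=
    (hg.differentiableOn one_ne_zero t ht).hasDerivWithinAt
  obtain ⟨c, hc_pos, hc_top, hgc⟩ := exists_tendsto_atTop_deriv_tendsto_zero
    (fun t ht ↦ (hfg t ht.le).hasDerivAt (Ici_mem_nhds ht)) (hlim.sub_const 1)
  have hbound (n : ℕ) := ofReal_profileCalibration_sub_le_lintegral (hc_pos n).le hfg hgh
    (hg.continuousOn_derivWithin (uniqueDiffOn_Ici 0) le_rfl)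
  refine le_of_tendsto' (x := atTop) (ENNReal.tendsto_ofReal ?_) hbound
  have hcal := tendsto_profileCalibration_zero
    (by simpa using (hlim.comp hc_top).sub_const 1) hgc
  simpa [h0, h0', profileCalibration] using hcal.const_sub (profileCalibration (-1) 0)
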